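/- Let f₁, f₂ be positive constants, G = g^{f₁,f₂}, and e₁,…,e_m a g-orthonormal horizontal basis at a point. The remaining components of the curvature of (TM,G) are: R^G(X^v,Y^h)Z^h = −½R(Y^h,Z^h)X^v − A^{∇_{Y^h}ℛ}(X^v,Z^h) + (δ/4)Σ_j⟨ℛ(Z^h,e_j),X^v⟩ℛ(Y^h,e_j); R^G(X^v,Y^h)Z^v = A^{∇_{X^v}ℛ}(Y^h,Z^v) + (δ²/4)Σ_{i,j}⟨ℛ(Y^h,e_j),Z^v⟩⟨ℛ(e_j,e_i),X^v⟩e_i; R^G(X^h,Y^h)Z^v = R(X^h,Y^h)Z^v − A^{∇_{Y^h}ℛ}(X^h,Z^v) + A^{∇_{X^h}ℛ}(Y^h,Z^v) + (δ/4)Σ_j(⟨ℛ(X^h,e_j),Z^v⟩ℛ(Y^h,e_j) − ⟨ℛ(Y^h,e_j),Z^v⟩ℛ(X^h,e_j)); R^G(X^v,Y^v)Z^h = −A^{∇_{Y^v}ℛ}(X^v,Z^h) + A^{∇_{X^v}ℛ}(Y^v,Z^h) + (δ²/4)Σ_{i,j}(⟨ℛ(Z^h,e_j),Y^v⟩⟨ℛ(e_j,e_i),X^v⟩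 − ⟨ℛ(Z^h,e_j),X^v⟩⟨ℛ(e_j,e_i),Y^v⟩)e_i; and R^G(X^v,Y^v)Z^v = 0. -/
import Mathlib


/-!
An abstract model of the calculus of vector fields on the total space `TM` of the
tangent bundle of a Riemannian manifold `(M,g)` with Levi-Civita connection `∇`
(Mathlib has no Riemannian curvature theory, so the setting of the paper is
axiomatised).  Here

* `F` plays the role of the commutative ℝ-algebra of smooth functions on `TM`;
* `VF` plays the role of the `F`-module of vector fields on `TM`, i.e. sections of
  `TTM = H ⊕ V`, where both subbundles are identified with the pull-back `π*TM`;
* `lie` is the Lie bracket of vector fields, `der X f` is the derivative `X(f)`;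
* `h`, `v` are the horizontal and vertical projections, `X = X^h + X^v`;
* `inn` is the Sasaki metric `⟨·,·⟩ = π*g ⊕ π*g` on `H ⊕ V`;
* `nab` is the metric connection `∇* = π*∇ ⊕ π*∇` on `TTM`;
* `xi` is the canonical vertical vector field `ξ`, `ξ_u = u`, with `∇*_X ξ = X^v`;
* `Rop` is the pull-back `π*R` of the curvature tensor `R` of `M`, acting
  diagonally on `H ⊕ V`; it is the curvature of `∇*`, and the torsion of `∇*` is
  the tensor `ℛ(X,Y) = π*R(X,Y)ξ`;
* `theta` is the endomorphism `θ` identifying `H` with `V` (and vanishing on `V`);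
* `nng f` means that the function `f : F` is pointwise nonnegative.
-/
structure SasakiModel where
  F : Type
  VF : Type
  [instCommRing : CommRing F]
  [instAlgebra : Algebra ℝ F]
  [instAddCommGroup : AddCommGroup VF]
  [instModule : Module F VF]
  lie : VF → VF → VF
  der : VF → F → F
  h : VF → VF
  v : VF → VF
  inn : VF → VF → F
  nab : VF → VF → VF
  xi : VF
  Rop : VF → VF → VF → VF
  theta : VF → VF
  nng : F → Prop
  der_add : ∀ X Y f, der (X + Y) f = der X f + der Y f
  der_smul : ∀ (g : F) (X : VF) (f : F), der (g • X) f = g * der X f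
  der_leibniz : ∀ X f g, der X (f * g) = der X f * g + f * der X g
  der_const : ∀ (X : VF) (c : ℝ), der X (algebraMap ℝ F c) = 0
  der_lie : ∀ X Y f, der (lie X Y) f = der X (der Y f) - der Y (der X f)
  lie_antisymm : ∀ X Y, lie X Y = -lie Y X
  h_add : ∀ X Y, h (X + Y) = h X + h Y
  h_smul : ∀ (f : F) (X : VF), h (f • X) = f • h X
  v_add : ∀ X Y, v (X + Y) = v X + v Y
  v_smul : ∀ (f : F) (X : VF), v (f • X) = f • v X
  h_add_v : ∀ X, h X + v X = X
  h_h : ∀ X, h (h X) = h X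
  v_v : ∀ X, v (v X) = v X
  h_of_v : ∀ X, h (v X) = 0
  v_of_h : ∀ X, v (h X) = 0
  inn_symm : ∀ X Y, inn X Y = inn Y X
  inn_add_left : ∀ X Y Z, inn (X + Y) Z = inn X Z + inn Y Z
  inn_smul_left : ∀ (f : F) (X Y : VF), inn (f • X) Y = f * inn X Y
  inn_hv : ∀ X Y, inn (h X) (v Y) = 0
  inn_nonneg : ∀ X, nng (inn X X)
  inn_nondeg : ∀ X, (∀ Y, inn X Y = 0) → X = 0
  nng_add : ∀ f g, nng f → nng g → nng (f + g)
  nng_mul : ∀ f g, nng f → nng g → nng (f * g)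
  nng_sq : ∀ f, nng (f * f)
  nab_add_left : ∀ X Y Z, nab (X + Y) Z = nab X Z + nab Y Z
  nab_smul_left : ∀ (f : F) (X Y : VF), nab (f • X) Y = f • nab X Y
  nab_add_right : ∀ X Y Z, nab X (Y + Z) = nab X Y + nab X Z
  nab_leibniz : ∀ (X : VF) (f : F) (Y : VF), nab X (f • Y) = der X f • Y + f • nab X Y
  nab_metric : ∀ X Y Z, der X (inn Y Z) = inn (nab X Y) Z + inn Y (nab X Z)
  nab_h : ∀ X Y, h (nab X (h Y)) = nab X (h Y)
  nab_v : ∀ X Y, v (nab X (v Y)) = nab X (v Y)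
  v_xi : v xi = xi
  nab_xi : ∀ X, nab X xi = v X
  Rop_add₁ : ∀ X X' Y Z, Rop (X + X') Y Z = Rop X Y Z + Rop X' Y Z
  Rop_smul₁ : ∀ (f : F) (X Y Z : VF), Rop (f • X) Y Z = f • Rop X Y Z
  Rop_add₃ : ∀ X Y Z Z', Rop X Y (Z + Z') = Rop X Y Z + Rop X Y Z'
  Rop_smul₃ : ∀ (f : F) (X Y Z : VF), Rop X Y (f • Z) = f • Rop X Y Z
  Rop_horiz : ∀ X Y Z, Rop X Y Z = Rop (h X) (h Y) Z
  Rop_antisymm : ∀ X Y Z, Rop X Y Z = -Rop Y X Z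
  Rop_skew : ∀ X Y Z W, inn (Rop X Y Z) W = -inn (Rop X Y W) Z
  Rop_v : ∀ X Y Z, v (Rop X Y (v Z)) = Rop X Y (v Z)
  Rop_h : ∀ X Y Z, h (Rop X Y (h Z)) = Rop X Y (h Z)
  Rop_parallel : ∀ X Y Z W, nab (v X) (Rop Y Z W) =
    Rop (nab (v X) Y) Z W + Rop Y (nab (v X) Z) W + Rop Y Z (nab (v X) W)
  curv_nab : ∀ X Y Z, nab X (nab Y Z) - nab Y (nab X Z) - nab (lie X Y) Z = Rop X Y Z
  torsion_nab : ∀ X Y, nab X Y - nab Y X - lie X Y = Rop X Y xi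
  theta_add : ∀ X Y, theta (X + Y) = theta X + theta Y
  theta_smul : ∀ (f : F) (X : VF), theta (f • X) = f • theta X
  theta_vert : ∀ X, v (theta X) = theta X
  theta_horiz : ∀ X, theta X = theta (h X)
  theta_inn : ∀ X Y, inn (theta X) (theta Y) = inn (h X) (h Y)

attribute [instance] SasakiModel.instCommRing SasakiModel.instAlgebra
  SasakiModel.instAddCommGroup SasakiModel.instModule

namespace SasakiModel

variable (M : SasakiModel)

/-- Multiplication of a vector field by a real constant. -/
def sm (c : ℝ) (X : M.VF) : M.VF := algebraMap ℝ M.F c • X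

/-- Real constants as functions on `TM`. -/
def cst (c : ℝ) : M.F := algebraMap ℝ M.F c

/-- The tensor `ℛ(X,Y) = π*R(X,Y)ξ`. -/
def calR (X Y : M.VF) : M.VF := M.Rop X Y M.xi

/-- The curvature operator of a connection `D` on `TTM`. -/
def curvOf (D : M.VF → M.VF → M.VF) (X Y Z : M.VF) : M.VF :=
  D X (D Y Z) - D Y (D X Z) - D (M.lie X Y) Z

/-- The covariant derivative `(∇*_X ℛ)(Y,Z)` of the tensor `ℛ`. -/
def nabR (X Y Z : M.VF) : M.VF :=
  M.nab X (M.calR Y Z) - M.calR (M.nab X Y) Z - M.calR Y (M.nab X Z)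

/-- The covariant derivative `(∇*_X (π*R))(Y,Z)W`; for horizontal `X = X^h` this is
the pull-back of `(∇_{X^h} R)(Y,Z)W`. -/
def DRop (X Y Z W : M.VF) : M.VF :=
  M.nab X (M.Rop Y Z W) - M.Rop (M.nab X Y) Z W - M.Rop Y (M.nab X Z) W -
    M.Rop Y Z (M.nab X W)

/-- The exterior covariant derivative `d^∇C` of a 1-form `C` with values in
`End TTM`, with respect to `∇ = ∇* ⊕ ∇*`:
`d^∇C(X,Y) = ∇_X C_Y - ∇_Y C_X - C_{[X,Y]}` as an endomorphism, applied to `Z`. -/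
def dC (C : M.VF → M.VF → M.VF) (X Y Z : M.VF) : M.VF :=
  M.nab X (C Y Z) - C Y (M.nab X Z) - (M.nab Y (C X Z) - C X (M.nab Y Z)) -
    C (M.lie X Y) Z

/-- The weighted Sasaki metric `G = g^{f₁,f₂} = f₁ π*g ⊕ f₂ π*g` on `H ⊕ V`,
for constant weights `f₁, f₂`. -/
def Gmet (f₁ f₂ : ℝ) (X Y : M.VF) : M.F :=
  M.cst f₁ * M.inn (M.h X) (M.h Y) + M.cst f₂ * M.inn (M.v X) (M.v Y)

end SasakiModel

namespace SasakiModel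

variable (M : SasakiModel)

/-- The Levi-Civita connection `∇^G = ∇* − ½ℛ + A` of the weighted Sasaki metric
`G = g^{f₁,f₂}` with constant weights, where the tensor `A` (determined by
`⟨A(X,Y),Z⟩ = (δ/2)(⟨ℛ(X,Z),Y⟩ + ⟨ℛ(Y,Z),X⟩)`, `δ = f₂/f₁`) is given as data. -/
noncomputable def nabGc (A : M.VF → M.VF → M.VF) (X Y : M.VF) : M.VF :=
  M.nab X Y - M.sm 2⁻¹ (M.calR X Y) + A X Y

end SasakiModel

namespace SasakiModel

variable {M : SasakiModel}

/-! ### Basic lemmas on the metric and projections -/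

lemma inn_add_right (X Y Z : M.VF) : M.inn X (Y + Z) = M.inn X Y + M.inn X Z := by
  rw [M.inn_symm, M.inn_add_left, M.inn_symm Y, M.inn_symm Z]

lemma inn_smul_right (f : M.F) (X Y : M.VF) : M.inn X (f • Y) = f * M.inn X Y := by
  rw [M.inn_symm, M.inn_smul_left, M.inn_symm]

lemma inn_zero_left (Y : M.VF) : M.inn 0 Y = 0 := by
  rw [← zero_smul M.F (0 : M.VF), M.inn_smul_left, zero_mul]

lemma inn_zero_right (X : M.VF) : M.inn X 0 = 0 := by
  rw [M.inn_symm, inn_zero_left]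

lemma inn_neg_left (X Y : M.VF) : M.inn (-X) Y = -M.inn X Y := by
  rw [← neg_one_smul M.F X, M.inn_smul_left, neg_one_mul]

lemma inn_sub_left (X Y Z : M.VF) : M.inn (X - Y) Z = M.inn X Z - M.inn Y Z := by
  rw [sub_eq_add_neg, M.inn_add_left, inn_neg_left, sub_eq_add_neg]

lemma ext_inn {X Y : M.VF} (hXY : ∀ W, M.inn X W = M.inn Y W) : X = Y := by
  have h0 : X - Y = 0 := M.inn_nondeg _ fun W => by
    rw [inn_sub_left, hXY, sub_self]
  exact sub_eq_zero.mp h0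

lemma h_zero : M.h 0 = 0 := by
  have := M.h_smul 0 0; simpa using this

lemma v_zero : M.v 0 = 0 := by
  have := M.v_smul 0 0; simpa using this

lemma v_eq_of_h_eq_zero {X : M.VF} (hX : M.h X = 0) : M.v X = X := by
  have := M.h_add_v X; rwa [hX, zero_add] at this

lemma h_eq_of_v_eq_zero {X : M.VF} (hX : M.v X = 0) : M.h X = X := by
  have := M.h_add_v X; rwa [hX, add_zero] at this

lemma inn_vh (X Y : M.VF) : M.inn (M.v X) (M.h Y) = 0 := by
  rw [M.inn_symm, M.inn_hv]

lemma inn_h_eq_zero {X : M.VF} (hX : M.h X = 0) (Y : M.VF) : M.inn X (M.h Y) = 0 := by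
  rw [← v_eq_of_h_eq_zero hX, inn_vh]

lemma inn_v_eq_zero {X : M.VF} (hX : M.v X = 0) (Y : M.VF) : M.inn X (M.v Y) = 0 := by
  rw [← h_eq_of_v_eq_zero hX, M.inn_hv]

lemma inn_eq_inn_h {X : M.VF} (hX : M.v X = 0) (Y : M.VF) :
    M.inn X Y = M.inn X (M.h Y) := by
  conv_lhs => rw [← M.h_add_v Y]
  rw [inn_add_right, inn_v_eq_zero hX, add_zero]

lemma inn_eq_inn_v {X : M.VF} (hX : M.h X = 0) (Y : M.VF) :
    M.inn X Y = M.inn X (M.v Y) := by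
  conv_lhs => rw [← M.h_add_v Y]
  rw [inn_add_right, inn_h_eq_zero hX, zero_add]

/-! ### Lemmas on the connection `∇*` -/

lemma nab_zero_right (X : M.VF) : M.nab X 0 = 0 := by
  have := M.nab_leibniz X 0 0
  simpa [zero_smul, smul_zero] using this

lemma nab_neg_right (X Y : M.VF) : M.nab X (-Y) = -M.nab X Y := by
  have h1 : ((-1 : M.F)) • Y = -Y := by rw [neg_one_smul]
  have h2 : (algebraMap ℝ M.F (-1)) = (-1 : M.F) := by
    rw [map_neg, map_one]
  rw [← h1, ← h2, M.nab_leibniz, M.der_const, zero_smul, zero_add, h2,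
    neg_one_smul]

lemma nab_sub_right (X Y Z : M.VF) : M.nab X (Y - Z) = M.nab X Y - M.nab X Z := by
  rw [sub_eq_add_neg, M.nab_add_right, nab_neg_right, sub_eq_add_neg]

lemma nab_sm (X : M.VF) (c : ℝ) (Y : M.VF) :
    M.nab X (M.sm c Y) = M.sm c (M.nab X Y) := by
  unfold sm
  rw [M.nab_leibniz, M.der_const, zero_smul, zero_add]

lemma h_nab (X Y : M.VF) : M.h (M.nab X Y) = M.nab X (M.h Y) := by
  conv_lhs => rw [← M.h_add_v Y]
  rw [M.nab_add_right, M.h_add, M.nab_h]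
  have hv : M.h (M.nab X (M.v Y)) = 0 := by
    rw [← M.nab_v, M.h_of_v]
  rw [hv, add_zero]

lemma v_nab (X Y : M.VF) : M.v (M.nab X Y) = M.nab X (M.v Y) := by
  conv_lhs => rw [← M.h_add_v Y]
  rw [M.nab_add_right, M.v_add, M.nab_v]
  have hh : M.v (M.nab X (M.h Y)) = 0 := by
    rw [← M.nab_h, M.v_of_h]
  rw [hh, zero_add]

lemma h_nab_eq_zero {X Z : M.VF} (hZ : M.h Z = 0) : M.h (M.nab X Z) = 0 := by
  rw [h_nab, hZ, nab_zero_right]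

lemma v_nab_eq_zero {X Z : M.VF} (hZ : M.v Z = 0) : M.v (M.nab X Z) = 0 := by
  rw [v_nab, hZ, nab_zero_right]

/-! ### Lemmas on `Rop` and `ℛ` -/

lemma Rop_zero₁ (Y Z : M.VF) : M.Rop 0 Y Z = 0 := by
  have := M.Rop_smul₁ 0 0 Y Z; simpa using this

lemma Rop_zero₂ (X Z : M.VF) : M.Rop X 0 Z = 0 := by
  rw [M.Rop_antisymm, Rop_zero₁, neg_zero]

lemma Rop_add₂ (X Y Y' Z : M.VF) : M.Rop X (Y + Y') Z = M.Rop X Y Z + M.Rop X Y' Z := by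
  rw [M.Rop_antisymm, M.Rop_add₁, M.Rop_antisymm Y, M.Rop_antisymm Y']; abel

lemma Rop_smul₂ (f : M.F) (X Y Z : M.VF) : M.Rop X (f • Y) Z = f • M.Rop X Y Z := by
  rw [M.Rop_antisymm, M.Rop_smul₁, M.Rop_antisymm Y, smul_neg, neg_neg]

lemma calR_add₁ (X X' Y : M.VF) : M.calR (X + X') Y = M.calR X Y + M.calR X' Y := by
  unfold calR; rw [M.Rop_add₁]

lemma calR_add₂ (X Y Y' : M.VF) : M.calR X (Y + Y') = M.calR X Y + M.calR X Y' := by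
  unfold calR; rw [Rop_add₂]

lemma calR_smul₁ (f : M.F) (X Y : M.VF) : M.calR (f • X) Y = f • M.calR X Y := by
  unfold calR; rw [M.Rop_smul₁]

lemma calR_smul₂ (f : M.F) (X Y : M.VF) : M.calR X (f • Y) = f • M.calR X Y := by
  unfold calR; rw [Rop_smul₂]

lemma calR_horiz (X Y : M.VF) : M.calR X Y = M.calR (M.h X) (M.h Y) := by
  unfold calR; rw [M.Rop_horiz]

lemma calR_zero₁ {X : M.VF} (hX : M.h X = 0) (Y : M.VF) : M.calR X Y = 0 := by
  rw [calR_horiz, hX]; unfold calR; rw [Rop_zero₁]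

lemma calR_zero₂ {Y : M.VF} (hY : M.h Y = 0) (X : M.VF) : M.calR X Y = 0 := by
  rw [calR_horiz, hY]; unfold calR; rw [Rop_zero₂]

lemma v_calR (X Y : M.VF) : M.v (M.calR X Y) = M.calR X Y := by
  unfold calR
  conv_lhs => rw [← M.v_xi]
  rw [M.Rop_v, M.v_xi]

lemma h_calR (X Y : M.VF) : M.h (M.calR X Y) = 0 := by
  rw [← v_calR, M.h_of_v]

lemma v_Rop_v (X Y Z : M.VF) : M.v (M.Rop X Y (M.v Z)) = M.Rop X Y (M.v Z) :=
  M.Rop_v X Y Z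

lemma h_Rop_v (X Y Z : M.VF) : M.h (M.Rop X Y (M.v Z)) = 0 := by
  rw [← v_Rop_v, M.h_of_v]

lemma h_neg (X : M.VF) : M.h (-X) = -M.h X := by
  rw [← neg_one_smul M.F X, M.h_smul, neg_one_smul]

lemma v_neg (X : M.VF) : M.v (-X) = -M.v X := by
  rw [← neg_one_smul M.F X, M.v_smul, neg_one_smul]

lemma h_sub' (X Y : M.VF) : M.h (X - Y) = M.h X - M.h Y := by
  rw [sub_eq_add_neg, M.h_add, h_neg, sub_eq_add_neg]

lemma v_sub' (X Y : M.VF) : M.v (X - Y) = M.v X - M.v Y := by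
  rw [sub_eq_add_neg, M.v_add, v_neg, sub_eq_add_neg]

end SasakiModel
namespace SasakiModel

variable {M : SasakiModel}

/-! ### Lemmas on `∇ℛ` -/

lemma v_nabR (X Y Z : M.VF) : M.v (M.nabR X Y Z) = M.nabR X Y Z := by
  unfold nabR
  rw [v_sub', v_sub', v_nab, v_calR, v_calR, v_calR]

lemma h_nabR (X Y Z : M.VF) : M.h (M.nabR X Y Z) = 0 := by
  rw [← v_nabR, M.h_of_v]

lemma nabR_zero₂ {Y : M.VF} (hY : M.h Y = 0) (X Z : M.VF) : M.nabR X Y Z = 0 := by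
  unfold nabR
  rw [calR_zero₁ hY, calR_zero₁ (h_nab_eq_zero hY), calR_zero₁ hY, nab_zero_right,
    sub_zero, sub_zero]

lemma nabR_zero₃ {Z : M.VF} (hZ : M.h Z = 0) (X Y : M.VF) : M.nabR X Y Z = 0 := by
  unfold nabR
  rw [calR_zero₂ hZ, calR_zero₂ hZ, calR_zero₂ (h_nab_eq_zero hZ), nab_zero_right,
    sub_zero, sub_zero]

lemma nabR_vert₁ (X Y Z : M.VF) : M.nabR (M.v X) Y Z = M.Rop Y Z (M.v X) := by
  unfold nabR calR
  have hp := M.Rop_parallel X Y Z M.xi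
  rw [hp, M.nab_xi, M.v_v]
  abel

end SasakiModel
namespace SasakiModel

variable {M : SasakiModel}

lemma inn_sum_left {ι : Type*} (s : Finset ι) (u : ι → M.VF) (W : M.VF) :
    M.inn (∑ i ∈ s, u i) W = ∑ i ∈ s, M.inn (u i) W :=
  map_sum (AddMonoidHom.mk' (fun U => M.inn U W) (fun a b => M.inn_add_left a b W)) u s

lemma calR_sum₂ {ι : Type*} (s : Finset ι) (X : M.VF) (u : ι → M.VF) :
    M.calR X (∑ i ∈ s, u i) = ∑ i ∈ s, M.calR X (u i) :=
  map_sum (AddMonoidHom.mk' (fun U => M.calR X U) (fun a b => calR_add₂ X a b)) u s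

lemma inn_sm_left (c : ℝ) (U W : M.VF) :
    M.inn (M.sm c U) W = M.cst c * M.inn U W := by
  unfold sm cst; rw [M.inn_smul_left]

lemma calR_sm₂ (c : ℝ) (X U : M.VF) :
    M.calR X (M.sm c U) = M.sm c (M.calR X U) := by
  unfold sm; rw [calR_smul₂]

lemma sm_sm (a b : ℝ) (U : M.VF) : M.sm a (M.sm b U) = M.sm (a * b) U := by
  unfold sm; rw [smul_smul, ← map_mul]

lemma sm_zero (a : ℝ) : M.sm a (0 : M.VF) = 0 := by
  unfold sm; rw [smul_zero]

lemma inn_eq_zero_of {U Z : M.VF} (hU : M.h U = 0) (hZ : M.v Z = 0) :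
    M.inn U Z = 0 := by
  rw [← h_eq_of_v_eq_zero hZ, inn_h_eq_zero hU]

lemma inn_v_left (T W : M.VF) : M.inn (M.v T) W = M.inn T (M.v W) := by
  rw [inn_eq_inn_v (M.h_of_v T) W]
  rw [M.inn_symm T, inn_eq_inn_v (M.h_of_v W) T, M.inn_symm]

section Atensor

variable {d : ℝ} {A : M.VF → M.VF → M.VF}
  (hA : ∀ X Y Z, M.inn (A X Y) Z =
      M.cst d * (M.inn (M.calR X Z) Y + M.inn (M.calR Y Z) X))

include hA

lemma A_zero₁ (Y : M.VF) : A 0 Y = 0 :=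
  ext_inn fun W => by
    rw [hA, calR_zero₁ h_zero, inn_zero_left, inn_zero_right, inn_zero_left,
      add_zero, mul_zero]

lemma A_zero₂ (X : M.VF) : A X 0 = 0 :=
  ext_inn fun W => by
    rw [hA, calR_zero₁ h_zero, inn_zero_left, inn_zero_right, inn_zero_left,
      zero_add, mul_zero]

lemma A_vv {X Y : M.VF} (hX : M.h X = 0) (hY : M.h Y = 0) : A X Y = 0 :=
  ext_inn fun W => by
    rw [hA, calR_zero₁ hX, calR_zero₁ hY, inn_zero_left, inn_zero_left,
      add_zero, mul_zero, inn_zero_left]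

lemma A_hh {X Y : M.VF} (hX : M.v X = 0) (hY : M.v Y = 0) : A X Y = 0 :=
  ext_inn fun W => by
    rw [hA, inn_eq_zero_of (h_calR _ _) hY, inn_eq_zero_of (h_calR _ _) hX,
      add_zero, mul_zero, inn_zero_left]

lemma v_A (X Y : M.VF) : M.v (A X Y) = 0 :=
  ext_inn fun W => by
    rw [inn_v_left, hA, calR_zero₂ (M.h_of_v W), calR_zero₂ (M.h_of_v W),
      inn_zero_left, inn_zero_left, add_zero, mul_zero, inn_zero_left]

lemma A_add₁ (X X' Y : M.VF) : A (X + X') Y = A X Y + A X' Y :=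
  ext_inn fun W => by
    rw [M.inn_add_left, hA, hA, hA, calR_add₁, M.inn_add_left, inn_add_right]
    ring

lemma A_add₂ (X Y Y' : M.VF) : A X (Y + Y') = A X Y + A X Y' :=
  ext_inn fun W => by
    rw [M.inn_add_left, hA, hA, hA, calR_add₁, M.inn_add_left, inn_add_right]
    ring

lemma A_smul₂ (f : M.F) (X Y : M.VF) : A X (f • Y) = f • A X Y :=
  ext_inn fun W => by
    rw [M.inn_smul_left, hA, hA, calR_smul₁, M.inn_smul_left, inn_smul_right]
    ring

lemma A_sub₁ (X X' Y : M.VF) : A (X - X') Y = A X Y - A X' Y := by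
  have hneg : A (-X') Y = -A X' Y := by
    have hadd : A X' Y + A (-X') Y = 0 := by
      rw [← A_add₁ hA, add_neg_cancel, A_zero₁ hA]
    exact eq_neg_of_add_eq_zero_right hadd
  rw [sub_eq_add_neg, A_add₁ hA, hneg, sub_eq_add_neg]

lemma A_sum₂ {ι : Type*} (s : Finset ι) (X : M.VF) (u : ι → M.VF) :
    A X (∑ i ∈ s, u i) = ∑ i ∈ s, A X (u i) :=
  map_sum (AddMonoidHom.mk' (fun U => A X U) (fun a b => A_add₂ hA X a b)) u s

lemma A_sm₂ (c : ℝ) (X U : M.VF) : A X (M.sm c U) = M.sm c (A X U) := by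
  unfold sm; rw [A_smul₂ hA]

end Atensor

end SasakiModel
namespace SasakiModel

variable {M : SasakiModel}

lemma der_cst_mul (X : M.VF) (c : ℝ) (u : M.F) :
    M.der X (M.cst c * u) = M.cst c * M.der X u := by
  unfold cst; rw [M.der_leibniz, M.der_const, zero_mul, zero_add]

lemma nab_calR (X Y W : M.VF) :
    M.nab X (M.calR Y W) =
      M.nabR X Y W + M.calR (M.nab X Y) W + M.calR Y (M.nab X W) := by
  unfold nabR; abel

lemma sm_add (c : ℝ) (U V : M.VF) : M.sm c (U + V) = M.sm c U + M.sm c V := by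
  unfold sm; rw [smul_add]

lemma der_addf {Y₀ W₀ : M.VF} (h1 : M.inn Y₀ W₀ = 1) (X : M.VF) (f g : M.F) :
    M.der X (f + g) = M.der X f + M.der X g := by
  have hL : M.nab X ((f + g) • Y₀) =
      M.der X (f + g) • Y₀ + (f + g) • M.nab X Y₀ := M.nab_leibniz X (f + g) Y₀
  have hR : M.nab X ((f + g) • Y₀) =
      (M.der X f • Y₀ + M.der X g • Y₀) + (f • M.nab X Y₀ + g • M.nab X Y₀) := by
    rw [add_smul, M.nab_add_right, M.nab_leibniz, M.nab_leibniz]; abel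
  have h5 := hL.symm.trans hR
  rw [add_smul f g (M.nab X Y₀)] at h5
  have h6 := add_right_cancel h5
  have h7 := congrArg (fun U => M.inn U W₀) h6
  simp only [M.inn_smul_left, M.inn_add_left, h1, mul_one] at h7
  exact h7

section Frame

variable {m : ℕ} {e : Fin m → M.VF}
  (he_h : ∀ i, M.h (e i) = e i)
  (he_complete : ∀ W, ∑ i, M.inn (M.h W) (e i) • e i = M.h W)

include he_h

lemma v_e (i : Fin m) : M.v (e i) = 0 := by
  rw [← he_h i, M.v_of_h]

include he_complete

lemma calR_frame (X W : M.VF) :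
    M.calR X (M.h W) = ∑ j, M.inn (M.h W) (e j) • M.calR X (e j) := by
  conv_lhs => rw [← he_complete W]
  rw [calR_sum₂]
  exact Finset.sum_congr rfl fun j _ => calR_smul₂ _ _ _

lemma inn_calR_expand (X Y W : M.VF) :
    M.inn (M.calR X W) Y =
      ∑ j, M.inn (M.calR (M.h X) (e j)) (M.v Y) * M.inn (e j) W := by
  rw [calR_horiz, inn_eq_inn_v (h_calR _ _), calR_frame he_h he_complete,
    inn_sum_left]
  refine Finset.sum_congr rfl fun j _ => ?_
  rw [M.inn_smul_left, M.inn_symm (M.h W) (e j), ← inn_eq_inn_h (v_e he_h j),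
    mul_comm]

end Frame

section Atensor2

variable {d : ℝ} {A : M.VF → M.VF → M.VF}
  (hA : ∀ X Y Z, M.inn (A X Y) Z =
      M.cst d * (M.inn (M.calR X Z) Y + M.inn (M.calR Y Z) X))
  {m : ℕ} {e : Fin m → M.VF}
  (he_h : ∀ i, M.h (e i) = e i)
  (he_complete : ∀ W, ∑ i, M.inn (M.h W) (e i) • e i = M.h W)

include hA he_h he_complete

lemma A_formula (X Y : M.VF) :
    A X Y = M.sm d ((∑ j, M.inn (M.calR (M.h X) (e j)) (M.v Y) • e j)
      + ∑ j, M.inn (M.calR (M.h Y) (e j)) (M.v X) • e j) :=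
  ext_inn fun W => by
    rw [hA, inn_sm_left, M.inn_add_left, inn_sum_left, inn_sum_left]
    simp only [M.inn_smul_left]
    rw [inn_calR_expand he_h he_complete X Y W, inn_calR_expand he_h he_complete Y X W]

end Atensor2

section ADtensor

variable {d : ℝ} {AD : M.VF → M.VF → M.VF → M.VF}
  (hAD : ∀ X Y Z W, M.inn (AD X Y Z) W =
      M.cst d * (M.inn (M.nabR X Y W) Z + M.inn (M.nabR X Z W) Y))

include hAD

lemma AD_v_hh {Y Z : M.VF} (hY : M.v Y = 0) (hZ : M.v Z = 0) (X : M.VF) :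
    AD (M.v X) Y Z = 0 :=
  ext_inn fun W => by
    rw [hAD, nabR_vert₁, nabR_vert₁, inn_eq_zero_of (h_Rop_v _ _ _) hZ,
      inn_eq_zero_of (h_Rop_v _ _ _) hY, add_zero, mul_zero, inn_zero_left]

lemma AD_vv {Y Z : M.VF} (hY : M.h Y = 0) (hZ : M.h Z = 0) (X : M.VF) :
    AD X Y Z = 0 :=
  ext_inn fun W => by
    rw [hAD, nabR_zero₂ hY, nabR_zero₂ hZ, inn_zero_left, inn_zero_left,
      add_zero, mul_zero, inn_zero_left]

end ADtensor

end SasakiModel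
namespace SasakiModel

variable {M : SasakiModel}

/-- The tensor `B = A − ½ℛ`, so that `∇^G = ∇* + B`. -/
noncomputable def Bc (M : SasakiModel) (A : M.VF → M.VF → M.VF) (X Y : M.VF) : M.VF :=
  A X Y - M.sm 2⁻¹ (M.calR X Y)

lemma calR_neg₁ (X Y : M.VF) : M.calR (-X) Y = -M.calR X Y := by
  rw [← neg_one_smul M.F X, calR_smul₁, neg_one_smul]

lemma calR_sub₁ (X X' Y : M.VF) : M.calR (X - X') Y = M.calR X Y - M.calR X' Y := by
  rw [sub_eq_add_neg, calR_add₁, calR_neg₁, sub_eq_add_neg]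

lemma sm_sub (c : ℝ) (U V : M.VF) : M.sm c (U - V) = M.sm c U - M.sm c V := by
  unfold sm; rw [smul_sub]

lemma nab_sub_left (X Y Z : M.VF) : M.nab (X - Y) Z = M.nab X Z - M.nab Y Z := by
  have hneg : M.nab (-Y) Z = -M.nab Y Z := by
    rw [← neg_one_smul M.F Y, M.nab_smul_left, neg_one_smul]
  rw [sub_eq_add_neg, M.nab_add_left, hneg, sub_eq_add_neg]

section Btensor

variable {d : ℝ} {A : M.VF → M.VF → M.VF}
  (hA : ∀ X Y Z, M.inn (A X Y) Z =
      M.cst d * (M.inn (M.calR X Z) Y + M.inn (M.calR Y Z) X))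

include hA

lemma Bc_add₂ (X Y Y' : M.VF) : M.Bc A X (Y + Y') = M.Bc A X Y + M.Bc A X Y' := by
  unfold Bc
  rw [A_add₂ hA, calR_add₂, sm_add]
  abel

lemma Bc_sub₁ (X X' Y : M.VF) : M.Bc A (X - X') Y = M.Bc A X Y - M.Bc A X' Y := by
  unfold Bc
  rw [A_sub₁ hA, calR_sub₁, sm_sub]
  abel

lemma Bc_vv {X Y : M.VF} (hX : M.h X = 0) (hY : M.h Y = 0) : M.Bc A X Y = 0 := by
  unfold Bc
  rw [A_vv hA hX hY, calR_zero₁ hX, sm_zero, sub_zero]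

lemma Bc_zero₁ (Y : M.VF) : M.Bc A 0 Y = 0 := by
  unfold Bc
  rw [A_zero₁ hA, calR_zero₁ h_zero, sm_zero, sub_zero]

lemma Bc_zero₂ (X : M.VF) : M.Bc A X 0 = 0 := by
  unfold Bc
  rw [A_zero₂ hA, calR_zero₂ h_zero, sm_zero, sub_zero]

/-- The structural decomposition of the curvature of `∇^G = ∇* + B`. -/
lemma curv_decomp (X Y Z : M.VF) :
    M.curvOf (M.nabGc A) X Y Z =
      M.Rop X Y Z
      + (M.nab X (M.Bc A Y Z) - M.Bc A (M.nab X Y) Z - M.Bc A Y (M.nab X Z))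
      - (M.nab Y (M.Bc A X Z) - M.Bc A (M.nab Y X) Z - M.Bc A X (M.nab Y Z))
      + M.Bc A X (M.Bc A Y Z) - M.Bc A Y (M.Bc A X Z) + M.Bc A (M.calR X Y) Z := by
  have hGc : ∀ U V, M.nabGc A U V = M.nab U V + M.Bc A U V := fun U V => by
    unfold nabGc Bc; abel
  have hlie : M.lie X Y = M.nab X Y - M.nab Y X - M.calR X Y := by
    have ht := M.torsion_nab X Y
    unfold calR
    rw [← ht]; abel
  have hcurv : M.Rop X Y Z =
      M.nab X (M.nab Y Z) - M.nab Y (M.nab X Z)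
        - (M.nab (M.nab X Y) Z - M.nab (M.nab Y X) Z - M.nab (M.calR X Y) Z) := by
    rw [← M.curv_nab X Y Z, hlie, nab_sub_left, nab_sub_left]
  unfold curvOf
  rw [hGc X, hGc Y, hGc (M.lie X Y), hGc Y, hGc X, M.nab_add_right, M.nab_add_right,
    Bc_add₂ hA, Bc_add₂ hA, hlie, nab_sub_left, nab_sub_left, Bc_sub₁ hA, Bc_sub₁ hA,
    hcurv]
  abel

end Btensor

section NabB

variable {d : ℝ} {A : M.VF → M.VF → M.VF} {AD : M.VF → M.VF → M.VF → M.VF}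
  (hA : ∀ X Y Z, M.inn (A X Y) Z =
      M.cst d * (M.inn (M.calR X Z) Y + M.inn (M.calR Y Z) X))
  (hAD : ∀ X Y Z W, M.inn (AD X Y Z) W =
      M.cst d * (M.inn (M.nabR X Y W) Z + M.inn (M.nabR X Z W) Y))
  (hder : ∀ (X : M.VF) (f g : M.F), M.der X (f + g) = M.der X f + M.der X g)

include hA hAD hder

/-- `∇*A = A^{∇ℛ}`. -/
lemma nabA (X Y Z : M.VF) :
    M.nab X (A Y Z) - A (M.nab X Y) Z - A Y (M.nab X Z) = AD X Y Z :=
  ext_inn fun W => by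
    have hm := M.nab_metric X (A Y Z) W
    have hd : M.der X (M.inn (A Y Z) W) =
        M.cst d * (M.der X (M.inn (M.calR Y W) Z) + M.der X (M.inn (M.calR Z W) Y)) := by
      rw [hA, der_cst_mul, hder]
    rw [M.nab_metric X (M.calR Y W) Z, M.nab_metric X (M.calR Z W) Y,
      nab_calR, nab_calR, M.inn_add_left, M.inn_add_left, M.inn_add_left,
      M.inn_add_left] at hd
    have h1 : M.inn (M.nab X (A Y Z)) W =
        M.der X (M.inn (A Y Z) W) - M.inn (A Y Z) (M.nab X W) := by
      rw [hm]; ring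
    rw [inn_sub_left, inn_sub_left, h1, hd, hA Y Z (M.nab X W),
      hA (M.nab X Y) Z W, hA Y (M.nab X Z) W, hAD X Y Z W]
    ring

end NabB

section NabB2

variable {A : M.VF → M.VF → M.VF} {AD : M.VF → M.VF → M.VF → M.VF}
  (hnabA : ∀ X Y Z, M.nab X (A Y Z) - A (M.nab X Y) Z - A Y (M.nab X Z) = AD X Y Z)

include hnabA

/-- The evaluation of `∇*B`. -/
lemma nabB_eval (X Y Z : M.VF) :
    M.nab X (M.Bc A Y Z) - M.Bc A (M.nab X Y) Z - M.Bc A Y (M.nab X Z) =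
      AD X Y Z - M.sm 2⁻¹ (M.nabR X Y Z) := by
  unfold Bc
  rw [nab_sub_right, nab_sm, nab_calR, sm_add, sm_add, ← hnabA X Y Z]
  abel

end NabB2

end SasakiModel
namespace SasakiModel

variable {M : SasakiModel}

lemma Rop_v_left (X Y Z : M.VF) : M.Rop (M.v X) Y Z = 0 := by
  rw [M.Rop_horiz, M.h_of_v, Rop_zero₁]

lemma smul_sm (f : M.F) (c : ℝ) (U : M.VF) : f • M.sm c U = M.sm c (f • U) := by
  unfold sm; rw [smul_smul, smul_smul, mul_comm]

lemma sm_sum {ι : Type*} (c : ℝ) (s : Finset ι) (u : ι → M.VF) :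
    M.sm c (∑ i ∈ s, u i) = ∑ i ∈ s, M.sm c (u i) := by
  unfold sm; rw [Finset.smul_sum]

lemma sm_congr {a b : ℝ} (hab : a = b) (U : M.VF) : M.sm a U = M.sm b U := by
  rw [hab]

lemma calR_zero₁0 (Y : M.VF) : M.calR 0 Y = 0 := calR_zero₁ h_zero Y

lemma calR_zero₂0 (X : M.VF) : M.calR X 0 = 0 := calR_zero₂ h_zero X

section Main

variable {d : ℝ} {A : M.VF → M.VF → M.VF}
  (hA : ∀ X Y Z, M.inn (A X Y) Z =
      M.cst d * (M.inn (M.calR X Z) Y + M.inn (M.calR Y Z) X))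
  {m : ℕ} {e : Fin m → M.VF}
  (he_h : ∀ i, M.h (e i) = e i)
  (he_complete : ∀ W, ∑ i, M.inn (M.h W) (e i) • e i = M.h W)

include hA he_h he_complete

lemma L_Avh (X Z : M.VF) :
    A (M.v X) (M.h Z) = M.sm d (∑ j, M.inn (M.calR (M.h Z) (e j)) (M.v X) • e j) := by
  rw [A_formula hA he_h he_complete]
  congr 1
  rw [M.h_of_v]
  simp only [calR_zero₁0, inn_zero_left, zero_smul, Finset.sum_const_zero, zero_add,
    M.h_h, M.v_v]

lemma L_Ahv (Y Z : M.VF) :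
    A (M.h Y) (M.v Z) = M.sm d (∑ j, M.inn (M.calR (M.h Y) (e j)) (M.v Z) • e j) := by
  rw [A_formula hA he_h he_complete]
  congr 1
  rw [M.h_of_v]
  simp only [calR_zero₁0, inn_zero_left, zero_smul, Finset.sum_const_zero, add_zero,
    M.h_h, M.v_v]

lemma L_Ave (X : M.VF) (j : Fin m) :
    A (M.v X) (e j) = M.sm d (∑ i, M.inn (M.calR (e j) (e i)) (M.v X) • e i) := by
  rw [A_formula hA he_h he_complete]
  congr 1
  rw [M.h_of_v, he_h j, v_e he_h j]
  simp only [calR_zero₁0, inn_zero_left, zero_smul, Finset.sum_const_zero, zero_add,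
    M.v_v]

lemma L_Bvh (X Z : M.VF) :
    M.Bc A (M.v X) (M.h Z) =
      M.sm d (∑ j, M.inn (M.calR (M.h Z) (e j)) (M.v X) • e j) := by
  unfold Bc
  rw [calR_zero₁ (M.h_of_v X), sm_zero, sub_zero, L_Avh hA he_h he_complete]

lemma L_Bhv (Y Z : M.VF) :
    M.Bc A (M.h Y) (M.v Z) =
      M.sm d (∑ j, M.inn (M.calR (M.h Y) (e j)) (M.v Z) • e j) := by
  unfold Bc
  rw [calR_zero₂ (M.h_of_v Z), sm_zero, sub_zero, L_Ahv hA he_h he_complete]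

/-- `B(X^v, ·)` applied to a horizontal frame combination gives the double sum. -/
lemma L_Bv_S (X : M.VF) (c : Fin m → M.F) :
    M.Bc A (M.v X) (M.sm d (∑ j, c j • e j)) =
      M.sm (d * d) (∑ i, ∑ j, (c j * M.inn (M.calR (e j) (e i)) (M.v X)) • e i) := by
  unfold Bc
  rw [calR_zero₁ (M.h_of_v X), sm_zero, sub_zero]
  rw [A_sm₂ hA, A_sum₂ hA]
  have step : ∀ j, A (M.v X) (c j • e j) =
      M.sm d (∑ i, (c j * M.inn (M.calR (e j) (e i)) (M.v X)) • e i) := by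
    intro j
    rw [A_smul₂ hA, L_Ave hA he_h he_complete X j, smul_sm, Finset.smul_sum]
    congr 1
    refine Finset.sum_congr rfl fun i _ => ?_
    rw [smul_smul]
  simp only [step]
  rw [← sm_sum, sm_sm]
  congr 1
  exact Finset.sum_comm
end Main

end SasakiModel
namespace SasakiModel

variable {M : SasakiModel}

lemma Rop_v_mid (X Y Z : M.VF) : M.Rop X (M.v Y) Z = 0 := by
  rw [M.Rop_horiz, M.h_of_v, Rop_zero₂]

lemma v_sum {ι : Type*} (s : Finset ι) (u : ι → M.VF) :
    M.v (∑ i ∈ s, u i) = ∑ i ∈ s, M.v (u i) :=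
  map_sum (AddMonoidHom.mk' (fun U => M.v U) (fun a b => M.v_add a b)) u s

section Cases

variable {d : ℝ} {A : M.VF → M.VF → M.VF} {AD : M.VF → M.VF → M.VF → M.VF}
  (hA : ∀ X Y Z, M.inn (A X Y) Z =
      M.cst d * (M.inn (M.calR X Z) Y + M.inn (M.calR Y Z) X))
  (hAD : ∀ X Y Z W, M.inn (AD X Y Z) W =
      M.cst d * (M.inn (M.nabR X Y W) Z + M.inn (M.nabR X Z W) Y))
  (hnabA : ∀ X Y Z, M.nab X (A Y Z) - A (M.nab X Y) Z - A Y (M.nab X Z) = AD X Y Z)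
  {m : ℕ} {e : Fin m → M.VF}
  (he_h : ∀ i, M.h (e i) = e i)
  (he_complete : ∀ W, ∑ i, M.inn (M.h W) (e i) • e i = M.h W)

include hA hAD hnabA he_h he_complete

lemma v_smS (c : ℝ) (f : Fin m → M.F) :
    M.v (M.sm c (∑ j, f j • e j)) = 0 := by
  unfold sm
  rw [M.v_smul, v_sum]
  simp only [M.v_smul, v_e he_h, smul_zero, Finset.sum_const_zero]

lemma L_Bh_S (X : M.VF) (c : Fin m → M.F) :
    M.Bc A (M.h X) (M.sm d (∑ j, c j • e j)) =
      -(M.sm (2⁻¹ * d) (∑ j, c j • M.calR (M.h X) (e j))) := by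
  unfold Bc
  rw [A_hh hA (M.v_of_h X) (v_smS hA hAD hnabA he_h he_complete d c), zero_sub,
    calR_sm₂, sm_sm, calR_sum₂]
  simp_rw [calR_smul₂]

lemma case5 (X Y Z : M.VF) : M.curvOf (M.nabGc A) (M.v X) (M.v Y) (M.v Z) = 0 := by
  rw [curv_decomp hA, nabB_eval hnabA, nabB_eval hnabA,
    AD_vv hAD (M.h_of_v Y) (M.h_of_v Z), AD_vv hAD (M.h_of_v X) (M.h_of_v Z),
    nabR_zero₂ (M.h_of_v Y), nabR_zero₂ (M.h_of_v X),
    Bc_vv hA (M.h_of_v Y) (M.h_of_v Z), Bc_vv hA (M.h_of_v X) (M.h_of_v Z),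
    Bc_zero₂ hA, Bc_zero₂ hA, calR_zero₁ (M.h_of_v X), Bc_zero₁ hA, Rop_v_left,
    sm_zero]
  abel

lemma case1 (X Y Z : M.VF) :
    M.curvOf (M.nabGc A) (M.v X) (M.h Y) (M.h Z) =
      -(M.sm 2⁻¹ (M.Rop (M.h Y) (M.h Z) (M.v X))) - AD (M.h Y) (M.v X) (M.h Z)
        + M.sm (2⁻¹ * d)
            (∑ j, M.inn (M.calR (M.h Z) (e j)) (M.v X) • M.calR (M.h Y) (e j)) := by
  rw [curv_decomp hA, nabB_eval hnabA, nabB_eval hnabA, Rop_v_left,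
    AD_v_hh hAD (M.v_of_h Y) (M.v_of_h Z), nabR_vert₁, nabR_zero₂ (M.h_of_v X),
    sm_zero]
  have hBhh : M.Bc A (M.h Y) (M.h Z) = -(M.sm 2⁻¹ (M.calR (M.h Y) (M.h Z))) := by
    unfold Bc; rw [A_hh hA (M.v_of_h Y) (M.v_of_h Z), zero_sub]
  have hvert : M.h (-(M.sm 2⁻¹ (M.calR (M.h Y) (M.h Z)))) = 0 := by
    rw [h_neg]; unfold sm; rw [M.h_smul, h_calR, smul_zero, neg_zero]
  rw [hBhh, Bc_vv hA (M.h_of_v X) hvert, L_Bvh hA he_h he_complete,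
    L_Bh_S hA hAD hnabA he_h he_complete, calR_zero₁ (M.h_of_v X), Bc_zero₁ hA]
  abel

lemma case2 (X Y Z : M.VF) :
    M.curvOf (M.nabGc A) (M.v X) (M.h Y) (M.v Z) =
      AD (M.v X) (M.h Y) (M.v Z)
        + M.sm (d * d)
            (∑ i, ∑ j,
              (M.inn (M.calR (M.h Y) (e j)) (M.v Z) *
                M.inn (M.calR (e j) (e i)) (M.v X)) • e i) := by
  rw [curv_decomp hA, nabB_eval hnabA, nabB_eval hnabA, Rop_v_left,
    nabR_zero₃ (M.h_of_v Z), AD_vv hAD (M.h_of_v X) (M.h_of_v Z),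
    nabR_zero₂ (M.h_of_v X), sm_zero,
    L_Bhv hA he_h he_complete, L_Bv_S hA he_h he_complete,
    Bc_vv hA (M.h_of_v X) (M.h_of_v Z), Bc_zero₂ hA,
    calR_zero₁ (M.h_of_v X), Bc_zero₁ hA]
  abel

lemma case3 (X Y Z : M.VF) :
    M.curvOf (M.nabGc A) (M.h X) (M.h Y) (M.v Z) =
      M.Rop (M.h X) (M.h Y) (M.v Z)
        - AD (M.h Y) (M.h X) (M.v Z) + AD (M.h X) (M.h Y) (M.v Z)
        + M.sm (2⁻¹ * d)
            (∑ j, (M.inn (M.calR (M.h X) (e j)) (M.v Z) • M.calR (M.h Y) (e j)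
              - M.inn (M.calR (M.h Y) (e j)) (M.v Z) • M.calR (M.h X) (e j))) := by
  rw [curv_decomp hA, nabB_eval hnabA, nabB_eval hnabA,
    nabR_zero₃ (M.h_of_v Z), nabR_zero₃ (M.h_of_v Z), sm_zero,
    L_Bhv hA he_h he_complete X Z, L_Bhv hA he_h he_complete Y Z,
    L_Bh_S hA hAD hnabA he_h he_complete X,
    L_Bh_S hA hAD hnabA he_h he_complete Y,
    Bc_vv hA (h_calR _ _) (M.h_of_v Z),
    Finset.sum_sub_distrib, sm_sub]
  abel

lemma case4 (X Y Z : M.VF) :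
    M.curvOf (M.nabGc A) (M.v X) (M.v Y) (M.h Z) =
      -AD (M.v Y) (M.v X) (M.h Z) + AD (M.v X) (M.v Y) (M.h Z)
        + M.sm (d * d)
            (∑ i, ∑ j,
              (M.inn (M.calR (M.h Z) (e j)) (M.v Y) * M.inn (M.calR (e j) (e i)) (M.v X)
                - M.inn (M.calR (M.h Z) (e j)) (M.v X) *
                    M.inn (M.calR (e j) (e i)) (M.v Y)) • e i) := by
  rw [curv_decomp hA, nabB_eval hnabA, nabB_eval hnabA, Rop_v_left,
    nabR_zero₂ (M.h_of_v Y), nabR_zero₂ (M.h_of_v X), sm_zero,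
    L_Bvh hA he_h he_complete Y Z, L_Bvh hA he_h he_complete X Z,
    L_Bv_S hA he_h he_complete X, L_Bv_S hA he_h he_complete Y,
    calR_zero₁ (M.h_of_v X), Bc_zero₁ hA]
  simp_rw [sub_smul, Finset.sum_sub_distrib]
  rw [sm_sub]
  abel

end Cases

end SasakiModel
open SasakiModel in
/-- Let `f₁, f₂` be positive constants, `G = g^{f₁,f₂}`, and
`e₁,…,e_m` a `g`-orthonormal horizontal basis.  The remaining components of the
curvature of `(TM,G)` are:
`R^G(X^v,Y^h)Z^h = −½R(Y^h,Z^h)X^v − A^{∇_{Y^h}ℛ}(X^v,Z^h)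
    + (δ/4)Σ_j ⟨ℛ(Z^h,e_j),X^v⟩ℛ(Y^h,e_j)`;
`R^G(X^v,Y^h)Z^v = A^{∇_{X^v}ℛ}(Y^h,Z^v)
    + (δ²/4)Σ_{i,j} ⟨ℛ(Y^h,e_j),Z^v⟩⟨ℛ(e_j,e_i),X^v⟩ e_i`;
`R^G(X^h,Y^h)Z^v = R(X^h,Y^h)Z^v − A^{∇_{Y^h}ℛ}(X^h,Z^v) + A^{∇_{X^h}ℛ}(Y^h,Z^v)
    + (δ/4)Σ_j (⟨ℛ(X^h,e_j),Z^v⟩ℛ(Y^h,e_j) − ⟨ℛ(Y^h,e_j),Z^v⟩ℛ(X^h,e_j))`;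
`R^G(X^v,Y^v)Z^h = −A^{∇_{Y^v}ℛ}(X^v,Z^h) + A^{∇_{X^v}ℛ}(Y^v,Z^h)
    + (δ²/4)Σ_{i,j} (⟨ℛ(Z^h,e_j),Y^v⟩⟨ℛ(e_j,e_i),X^v⟩
        − ⟨ℛ(Z^h,e_j),X^v⟩⟨ℛ(e_j,e_i),Y^v⟩) e_i`;
`R^G(X^v,Y^v)Z^v = 0`. -/
theorem curvature_G_mixed_components
    (M : SasakiModel) (f₁ f₂ : ℝ) (hf₁ : 0 < f₁) (hf₂ : 0 < f₂)
    (A : M.VF → M.VF → M.VF)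
    (hA : ∀ X Y Z, M.inn (A X Y) Z =
      M.cst (f₂ / f₁ / 2) * (M.inn (M.calR X Z) Y + M.inn (M.calR Y Z) X))
    (AD : M.VF → M.VF → M.VF → M.VF)
    (hAD : ∀ X Y Z W, M.inn (AD X Y Z) W =
      M.cst (f₂ / f₁ / 2) * (M.inn (M.nabR X Y W) Z + M.inn (M.nabR X Z W) Y))
    (m : ℕ) (e : Fin m → M.VF)
    (he_h : ∀ i, M.h (e i) = e i)
    (he_on : ∀ i j, M.inn (e i) (e j) = if i = j then 1 else 0)
    (he_complete : ∀ W, ∑ i, M.inn (M.h W) (e i) • e i = M.h W) :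
    ∀ X Y Z : M.VF,
      (M.curvOf (M.nabGc A) (M.v X) (M.h Y) (M.h Z) =
        -(M.sm 2⁻¹ (M.Rop (M.h Y) (M.h Z) (M.v X)))
          - AD (M.h Y) (M.v X) (M.h Z)
          + M.sm (f₂ / f₁ / 4)
              (∑ j, M.inn (M.calR (M.h Z) (e j)) (M.v X) • M.calR (M.h Y) (e j))) ∧
      (M.curvOf (M.nabGc A) (M.v X) (M.h Y) (M.v Z) =
        AD (M.v X) (M.h Y) (M.v Z)
          + M.sm ((f₂ / f₁) ^ 2 / 4)
              (∑ i, ∑ j,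
                (M.inn (M.calR (M.h Y) (e j)) (M.v Z) *
                  M.inn (M.calR (e j) (e i)) (M.v X)) • e i)) ∧
      (M.curvOf (M.nabGc A) (M.h X) (M.h Y) (M.v Z) =
        M.Rop (M.h X) (M.h Y) (M.v Z)
          - AD (M.h Y) (M.h X) (M.v Z) + AD (M.h X) (M.h Y) (M.v Z)
          + M.sm (f₂ / f₁ / 4)
              (∑ j, (M.inn (M.calR (M.h X) (e j)) (M.v Z) • M.calR (M.h Y) (e j)
                - M.inn (M.calR (M.h Y) (e j)) (M.v Z) • M.calR (M.h X) (e j)))) ∧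
      (M.curvOf (M.nabGc A) (M.v X) (M.v Y) (M.h Z) =
        -AD (M.v Y) (M.v X) (M.h Z) + AD (M.v X) (M.v Y) (M.h Z)
          + M.sm ((f₂ / f₁) ^ 2 / 4)
              (∑ i, ∑ j,
                (M.inn (M.calR (M.h Z) (e j)) (M.v Y) * M.inn (M.calR (e j) (e i)) (M.v X)
                  - M.inn (M.calR (M.h Z) (e j)) (M.v X) *
                      M.inn (M.calR (e j) (e i)) (M.v Y)) • e i)) ∧
      (M.curvOf (M.nabGc A) (M.v X) (M.v Y) (M.v Z) = 0) := by
  have key : (∀ X Y Z, M.nab X (A Y Z) - A (M.nab X Y) Z - A Y (M.nab X Z) = AD X Y Z) →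
      ∀ X Y Z : M.VF,
      (M.curvOf (M.nabGc A) (M.v X) (M.h Y) (M.h Z) =
        -(M.sm 2⁻¹ (M.Rop (M.h Y) (M.h Z) (M.v X)))
          - AD (M.h Y) (M.v X) (M.h Z)
          + M.sm (f₂ / f₁ / 4)
              (∑ j, M.inn (M.calR (M.h Z) (e j)) (M.v X) • M.calR (M.h Y) (e j))) ∧
      (M.curvOf (M.nabGc A) (M.v X) (M.h Y) (M.v Z) =
        AD (M.v X) (M.h Y) (M.v Z)
          + M.sm ((f₂ / f₁) ^ 2 / 4)
              (∑ i, ∑ j,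
                (M.inn (M.calR (M.h Y) (e j)) (M.v Z) *
                  M.inn (M.calR (e j) (e i)) (M.v X)) • e i)) ∧
      (M.curvOf (M.nabGc A) (M.h X) (M.h Y) (M.v Z) =
        M.Rop (M.h X) (M.h Y) (M.v Z)
          - AD (M.h Y) (M.h X) (M.v Z) + AD (M.h X) (M.h Y) (M.v Z)
          + M.sm (f₂ / f₁ / 4)
              (∑ j, (M.inn (M.calR (M.h X) (e j)) (M.v Z) • M.calR (M.h Y) (e j)
                - M.inn (M.calR (M.h Y) (e j)) (M.v Z) • M.calR (M.h X) (e j)))) ∧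
      (M.curvOf (M.nabGc A) (M.v X) (M.v Y) (M.h Z) =
        -AD (M.v Y) (M.v X) (M.h Z) + AD (M.v X) (M.v Y) (M.h Z)
          + M.sm ((f₂ / f₁) ^ 2 / 4)
              (∑ i, ∑ j,
                (M.inn (M.calR (M.h Z) (e j)) (M.v Y) * M.inn (M.calR (e j) (e i)) (M.v X)
                  - M.inn (M.calR (M.h Z) (e j)) (M.v X) *
                      M.inn (M.calR (e j) (e i)) (M.v Y)) • e i)) ∧
      (M.curvOf (M.nabGc A) (M.v X) (M.v Y) (M.v Z) = 0) := by
    intro hnabA X Y Z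
    have hc1 : M.sm (f₂ / f₁ / 4) = M.sm (2⁻¹ * (f₂ / f₁ / 2)) :=
      funext fun U => sm_congr (by ring) U
    have hc2 : M.sm ((f₂ / f₁) ^ 2 / 4) = M.sm ((f₂ / f₁ / 2) * (f₂ / f₁ / 2)) :=
      funext fun U => sm_congr (by ring) U
    refine ⟨?_, ?_, ?_, ?_, ?_⟩
    · rw [hc1]; exact case1 hA hAD hnabA he_h he_complete X Y Z
    · rw [hc2]; exact case2 hA hAD hnabA he_h he_complete X Y Z
    · rw [hc1]; exact case3 hA hAD hnabA he_h he_complete X Y Z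
    · rw [hc2]; exact case4 hA hAD hnabA he_h he_complete X Y Z
    · exact case5 hA hAD hnabA he_h he_complete X Y Z
  rcases Nat.eq_zero_or_pos m with hm | hm
  · subst hm
    have hW0 : ∀ W, M.h W = 0 := fun W => by
      have h := (he_complete W).symm; simpa using h
    exact key fun X Y Z => by
      rw [A_vv hA (hW0 Y) (hW0 Z), A_vv hA (hW0 (M.nab X Y)) (hW0 Z),
        A_vv hA (hW0 Y) (hW0 (M.nab X Z)), AD_vv hAD (hW0 Y) (hW0 Z),
        nab_zero_right, sub_zero, sub_zero]
  · have h1 : M.inn (e ⟨0, hm⟩) (e ⟨0, hm⟩) = 1 := by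
      rw [he_on]; simp
    exact key (nabA hA hAD (der_addf h1))
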